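/- Fix 0 < r ≤ 1 and let k = ⌊1/r⌋. There exists a constant 0 < d_r ≤ 1 such that for all sufficiently large n, d_r·ω(n,k) ≤ Q(n,⌈rn⌉) ≤ ω(n,k). In particular Q(n,⌈rn⌉) = Θ(ω(n,k)). -/

import Mathlib

/-!
Upper bound: a graph on `n` vertices with `α ≤ k` has `χ ≥ n / k ≥ r n`, and deleting one edge
lowers `χ` by at most one, so it has a subgraph with `χ = ⌈r n⌉` and no larger clique number.

Lower bound: let `G` have `χ(G) = c = ⌈r n⌉` and `ω(G) = Q(n, c)`, and delete independent
`(k+1)`-sets while there are any. Each deletion costs `k + 1` vertices and at most one colour, so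
the remaining set `T` satisfies `α(G[T]) ≤ k` and `(k + 1) c ≤ k |T| + n`; as `r (k + 1) > 1`,
`|T|` is at least a fixed fraction `1 / M` of `n`. Joins make `ω(·, k)` subadditive, hence
`ω(n, k) ≤ M ω(|T|, k) ≤ M ω(G[T]) ≤ M Q(n, c)`.
-/

open SimpleGraph

/-- The independence number of a graph: clique number of the complement. -/
noncomputable def indepNum {V : Type*} (G : SimpleGraph V) : ℕ := Gᶜ.cliqueNum

/-- The chromatic number of a graph, as a natural number. -/
noncomputable def chi {V : Type*} (G : SimpleGraph V) : ℕ := G.chromaticNumber.toNat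

/-- The inverse Ramsey number ω(n,k): minimum clique number over graphs on
`n` vertices with independence number at most `k`. -/
noncomputable def invRamsey (n k : ℕ) : ℕ :=
  sInf {w | ∃ G : SimpleGraph (Fin n), _root_.indepNum G ≤ k ∧ G.cliqueNum = w}

/-- Q(n,c): minimum clique number over graphs on `n` vertices with chromatic number `c`. -/
noncomputable def Q (n c : ℕ) : ℕ :=
  sInf {w | ∃ G : SimpleGraph (Fin n), chi G = c ∧ G.cliqueNum = w}

namespace SimpleGraph

variable {V W : Type*} {G : SimpleGraph V} {H : SimpleGraph W}

lemma cliqueNum_bot_le_one : (⊥ : SimpleGraph V).cliqueNum ≤ 1 := by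
  exact_mod_cast cliqueNum_le_chromaticNumber.trans (colorable_one_iff.2 rfl).chromaticNumber_le

lemma cliqueNum_eq_zero_of_isEmpty [IsEmpty V] (G : SimpleGraph V) : G.cliqueNum = 0 :=
  Nat.eq_zero_of_le_zero <| by
    exact_mod_cast G.cliqueNum_le_chromaticNumber.trans_eq chromaticNumber_eq_zero_of_isEmpty

lemma cliqueNum_mono [Finite V] {G' : SimpleGraph V} (h : G ≤ G') :
    G.cliqueNum ≤ G'.cliqueNum := by
  obtain ⟨s, hs⟩ := G.exists_isNClique_cliqueNum
  exact hs.card_eq ▸ (hs.isClique.mono h).card_le_cliqueNum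

lemma Embedding.cliqueNum_le [Finite W] (f : G ↪g H) : G.cliqueNum ≤ H.cliqueNum := by
  obtain ⟨s, hs⟩ := G.exists_isNClique_cliqueNum
  rw [← hs.card_eq, ← s.card_map f.toEmbedding]
  refine IsClique.card_le_cliqueNum (tc := ?_)
  rw [Finset.coe_map]
  rintro _ ⟨u, hu, rfl⟩ _ ⟨v, hv, rfl⟩ huv
  exact f.map_adj_iff.2 (hs.isClique hu hv (ne_of_apply_ne _ huv))

lemma Embedding.indepNum_le [Finite W] (f : G ↪g H) : G.indepNum ≤ H.indepNum := by
  simpa using (Embedding.complEquiv f).cliqueNum_le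

lemma indepNum_sum_le [Finite V] [Finite W] :
    (G ⊕g H).indepNum ≤ G.indepNum + H.indepNum := by
  obtain ⟨s, hs⟩ := (G ⊕g H).exists_isNIndepSet_indepNum
  rw [← hs.card_eq, ← s.card_toLeft_add_card_toRight]
  refine add_le_add (IsIndepSet.card_le_indepNum ?_) (IsIndepSet.card_le_indepNum ?_) <;>
  · intro u hu v hv huv
    simpa using hs.isIndepSet (by simpa using hu) (by simpa using hv) (by simpa using huv)

lemma cliqueNum_sum_le [Finite V] [Finite W] :
    (G ⊕g H).cliqueNum ≤ max G.cliqueNum H.cliqueNum := by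
  obtain ⟨s, hs⟩ := (G ⊕g H).exists_isNClique_cliqueNum
  have left : G.IsClique (s.toLeft : Set V) := by
    intro u hu v hv huv
    simpa using hs.isClique (by simpa using hu) (by simpa using hv) (by simpa using huv)
  have right : H.IsClique (s.toRight : Set W) := by
    intro u hu v hv huv
    simpa using hs.isClique (by simpa using hu) (by simpa using hv) (by simpa using huv)
  have one_side : s.toLeft = ∅ ∨ s.toRight = ∅ := by
    by_contra! h
    obtain ⟨⟨u, hu⟩, ⟨w, hw⟩⟩ := h
    simpa using hs.isClique (Finset.mem_toLeft.1 hu) (Finset.mem_toRight.1 hw) Sum.inl_ne_inr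
  rw [← hs.card_eq, ← s.card_toLeft_add_card_toRight]
  rcases one_side with h | h <;> simp only [h, Finset.card_empty, zero_add, add_zero]
  · exact le_max_of_le_right right.card_le_cliqueNum
  · exact le_max_of_le_left left.card_le_cliqueNum

lemma Colorable.induce_succ_of_isIndepSet {s I : Set V} {t : ℕ}
    (h : (G.induce (s \ I)).Colorable t) (hI : G.IsIndepSet I) :
    (G.induce s).Colorable (t + 1) := by
  classical
  obtain ⟨C⟩ := h
  let C' : (G.induce s).Coloring (Option (Fin t)) :=
    Coloring.mk (fun v => if hv : (v : V) ∈ I then none else some (C ⟨v, v.2, hv⟩)) <| by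
      rintro ⟨u, hu⟩ ⟨v, hv⟩ (huv : G.Adj u v)
      by_cases hu' : u ∈ I <;> by_cases hv' : v ∈ I <;> simp only [hu', hv', dite_true, dite_false]
      · exact fun _ => hI hu' hv' huv.ne huv
      · exact Option.some_ne_none _ |>.symm
      · exact Option.some_ne_none _
      · exact fun h =>
          C.valid (v := ⟨u, hu, hu'⟩) (w := ⟨v, hv, hv'⟩) huv (Option.some_injective _ h)
  simpa using C'.colorable

lemma Colorable.succ_of_deleteEdges {a b : V} {t : ℕ}
    (h : (G.deleteEdges {s(a, b)}).Colorable t) : G.Colorable (t + 1) := by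
  have h' : (G.induce (Set.univ \ {a})).Colorable t :=
    h.of_hom ⟨fun v => (v : V), fun {v w} hvw => deleteEdges_adj.2 ⟨hvw, by
      obtain ⟨-, hv : (v : V) ≠ a⟩ := v.2
      obtain ⟨-, hw : (w : V) ≠ a⟩ := w.2
      simp [hv, hw]⟩⟩
  exact (colorable_congr (induceUnivIso G)).1
    (h'.induce_succ_of_isIndepSet (Set.pairwise_singleton a _))

end SimpleGraph

section Chi

variable {V W : Type*} {G : SimpleGraph V}

lemma indepNum_eq_indepNum (G : SimpleGraph V) : _root_.indepNum G = G.indepNum :=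
  cliqueNum_compl

lemma chi_congr {H : SimpleGraph W} (f : G ≃g H) : chi G = chi H := by
  rw [chi, chi, chromaticNumber_congr f]

variable [Finite V]

lemma colorable_chi (G : SimpleGraph V) : G.Colorable (chi G) :=
  G.colorable_chromaticNumber_of_fintype

lemma chi_le_iff_colorable {t : ℕ} : chi G ≤ t ↔ G.Colorable t :=
  ⟨fun h => (colorable_chi G).mono h, fun h => ENat.toNat_le_of_le_natCast h.chromaticNumber_le⟩

lemma card_le_chi_mul_indepNum [Fintype V] (G : SimpleGraph V) :
    Fintype.card V ≤ chi G * G.indepNum := by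
  classical
  obtain ⟨C⟩ := colorable_chi G
  have fiber (c : Fin (chi G)) : (Finset.univ.filter fun v => C v = c).card ≤ G.indepNum :=
    IsIndepSet.card_le_indepNum fun u hu v hv _ hadj =>
      C.valid hadj (by simp_all)
  calc Fintype.card V ≤ G.indepNum * (Finset.univ.image C).card :=
        Finset.card_le_mul_card_image _ _ fun c _ => fiber c
    _ ≤ G.indepNum * chi G :=
        Nat.mul_le_mul_left _ ((Finset.card_le_univ _).trans_eq (Fintype.card_fin _))
    _ = chi G * G.indepNum := mul_comm _ _

lemma exists_le_chi_eq (G : SimpleGraph V) {c : ℕ} (hc : 1 ≤ c) (hcG : c ≤ chi G) :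
    ∃ H ≤ G, chi H = c := by
  induction G using WellFoundedLT.induction with
  | _ G ih =>
  obtain hcG | hcG := hcG.eq_or_lt
  · exact ⟨G, le_rfl, hcG.symm⟩
  obtain ⟨e, he⟩ : G.edgeSet.Nonempty := by
    refine edgeSet_nonempty.2 fun hG => ?_
    have := chi_le_iff_colorable.2 (colorable_one_iff.2 hG)
    omega
  induction e using Sym2.ind with
  | _ a b =>
  have hlt : G.deleteEdges {s(a, b)} < G :=
    (deleteEdges_le _).lt_of_ne fun h =>
      Set.disjoint_singleton_right.1 (deleteEdges_eq_self.1 h) he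
  have hsucc :=
    chi_le_iff_colorable.2 (colorable_chi (G.deleteEdges {s(a, b)})).succ_of_deleteEdges
  obtain ⟨H, hH, hHc⟩ := ih _ hlt (by omega)
  exact ⟨H, hH.trans hlt.le, hHc⟩

end Chi

open Finset in
lemma exists_induce_indepNum_le {V : Type*} [Finite V] (G : SimpleGraph V) (k : ℕ)
    (S : Finset V) :
    ∃ T : Finset V, (G.induce (T : Set V)).indepNum ≤ k ∧
      (k + 1) * chi (G.induce (S : Set V)) ≤ k * #T + #S := by
  classical
  induction S using Finset.strongInduction with
  | H S ih =>
  by_cases hS : (G.induce (S : Set V)).indepNum ≤ k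
  · refine ⟨S, hS, ?_⟩
    have := chi_le_iff_colorable.2 (G.induce (S : Set V)).colorable_of_fintype
    simp only [Finset.coe_sort_coe, Fintype.card_coe] at this
    nlinarith
  obtain ⟨I, hIS, hIcard, hI⟩ : ∃ I ⊆ S, #I = k + 1 ∧ G.IsIndepSet (I : Set V) := by
    obtain ⟨t, ht⟩ := (G.induce (S : Set V)).exists_isNIndepSet_indepNum
    obtain ⟨t', ht't, ht'⟩ := exists_subset_card_eq (ht.card_eq ▸ not_le.1 hS : k + 1 ≤ #t)
    refine ⟨t'.map (.subtype _), fun v hv => ?_, by simpa using ht', ?_⟩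
    · obtain ⟨v, -, rfl⟩ := mem_map.1 hv
      exact v.2
    · rintro _ hu _ hv huv
      obtain ⟨u, hu', rfl⟩ := mem_map.1 hu
      obtain ⟨v, hv', rfl⟩ := mem_map.1 hv
      exact ht.isIndepSet (ht't hu') (ht't hv') (ne_of_apply_ne _ huv)
  obtain ⟨T, hT, hchi⟩ := ih (S \ I) (sdiff_ssubset hIS (by rw [← card_pos]; omega))
  have hstep : chi (G.induce (S : Set V)) ≤ chi (G.induce ((S \ I : Finset V) : Set V)) + 1 := by
    rw [coe_sdiff, chi_le_iff_colorable]
    exact (colorable_chi _).induce_succ_of_isIndepSet hI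
  have hcard := card_sdiff_add_card_eq_card hIS
  refine ⟨T, hT, ?_⟩
  nlinarith

section InverseRamsey

variable {k : ℕ}

lemma invRamsey_spec (hk : 1 ≤ k) (n : ℕ) :
    ∃ G : SimpleGraph (Fin n), _root_.indepNum G ≤ k ∧ G.cliqueNum = invRamsey n k := by
  refine Nat.sInf_mem
    (s := {w | ∃ G : SimpleGraph (Fin n), _root_.indepNum G ≤ k ∧ G.cliqueNum = w})
    ⟨_, ⊤, ?_, rfl⟩
  rw [_root_.indepNum, compl_top]
  exact cliqueNum_bot_le_one.trans hk

lemma invRamsey_le_cliqueNum {W : Type*} [Fintype W] (G : SimpleGraph W)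
    (hG : G.indepNum ≤ k) : invRamsey (Fintype.card W) k ≤ G.cliqueNum := by
  let f := (Iso.map (Fintype.equivFin W) G).symm.toEmbedding
  refine (Nat.sInf_le ?_).trans f.cliqueNum_le
  refine ⟨_, ?_, rfl⟩
  rw [indepNum_eq_indepNum]
  exact f.indepNum_le.trans hG

lemma invRamsey_mono (hk : 1 ≤ k) {m n : ℕ} (hmn : m ≤ n) : invRamsey m k ≤ invRamsey n k := by
  obtain ⟨G, hGk, hG⟩ := invRamsey_spec hk n
  let f := Embedding.comap (Fin.castLEEmb hmn) G
  rw [indepNum_eq_indepNum] at hGk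
  simpa [← hG] using invRamsey_le_cliqueNum _ (f.indepNum_le.trans hGk) |>.trans f.cliqueNum_le

/-- The join of extremal graphs on `a` and `b` vertices, i.e. the complement of the disjoint sum of
their complements, witnesses subadditivity. -/
lemma invRamsey_add_le (hk : 1 ≤ k) (a b : ℕ) :
    invRamsey (a + b) k ≤ invRamsey a k + invRamsey b k := by
  obtain ⟨G, hGk, hG⟩ := invRamsey_spec hk a
  obtain ⟨H, hHk, hH⟩ := invRamsey_spec hk b
  rw [indepNum_eq_indepNum] at hGk hHk
  have hjoin := invRamsey_le_cliqueNum (Gᶜ ⊕g Hᶜ)ᶜ (k := k) (by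
    simpa using cliqueNum_sum_le.trans (max_le (by simpa using hGk) (by simpa using hHk)))
  simp only [Fintype.card_sum, Fintype.card_fin, cliqueNum_compl] at hjoin
  simpa [← hG, ← hH] using hjoin.trans indepNum_sum_le

lemma invRamsey_mul_le (hk : 1 ≤ k) (B m : ℕ) : invRamsey (B * m) k ≤ B * invRamsey m k := by
  induction B with
  | zero =>
    have := invRamsey_le_cliqueNum (⊥ : SimpleGraph (Fin 0)) (k := k)
      (by simp [← cliqueNum_compl, cliqueNum_eq_zero_of_isEmpty])
    simpa [cliqueNum_eq_zero_of_isEmpty] using this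
  | succ B ih =>
    rw [add_mul, add_mul, one_mul]
    exact (invRamsey_add_le hk _ _).trans (by omega)

end InverseRamsey

section ChromaticClique

variable {n c k : ℕ}

lemma Q_spec (hc : 1 ≤ c) (hcn : c ≤ n) :
    ∃ G : SimpleGraph (Fin n), chi G = c ∧ G.cliqueNum = Q n c := by
  refine Nat.sInf_mem (s := {w | ∃ G : SimpleGraph (Fin n), chi G = c ∧ G.cliqueNum = w}) ?_
  have htop : chi (⊤ : SimpleGraph (Fin n)) = n := by simp [chi, chromaticNumber_top]
  obtain ⟨G, -, hG⟩ := exists_le_chi_eq ⊤ hc (htop ▸ hcn)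
  exact ⟨_, G, hG, rfl⟩

lemma Q_le_invRamsey (hk : 1 ≤ k) (hc : 1 ≤ c) (hcn : c * k < n + k) :
    Q n c ≤ invRamsey n k := by
  obtain ⟨G, hGk, hG⟩ := invRamsey_spec hk n
  rw [indepNum_eq_indepNum] at hGk
  have hn := card_le_chi_mul_indepNum G
  rw [Fintype.card_fin] at hn
  have hcG : c ≤ chi G :=
    Nat.lt_succ_iff.1 (Nat.lt_of_mul_lt_mul_right (a := k) (by nlinarith))
  obtain ⟨H, hHG, hH⟩ := exists_le_chi_eq G hc hcG
  refine (Nat.sInf_le ?_).trans (hG ▸ cliqueNum_mono hHG)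
  exact ⟨H, hH, rfl⟩

lemma exists_invRamsey_le_Q (k : ℕ) (hc : 1 ≤ c) (hcn : c ≤ n) :
    ∃ s, (k + 1) * c ≤ k * s + n ∧ invRamsey s k ≤ Q n c := by
  obtain ⟨G, hGc, hG⟩ := Q_spec hc hcn
  obtain ⟨T, hT, hchi⟩ := exists_induce_indepNum_le G k Finset.univ
  rw [Finset.coe_univ, chi_congr (induceUnivIso G), hGc, Finset.card_univ,
    Fintype.card_fin] at hchi
  have hTG := invRamsey_le_cliqueNum _ hT
  simp only [Finset.coe_sort_coe, Fintype.card_coe] at hTG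
  exact ⟨T.card, hchi, hTG.trans (hG ▸ cliqueNum_induce_le _)⟩

end ChromaticClique

lemma mul_floor_one_div_le_one {r : ℝ} (hr : 0 < r) : r * ⌊1 / r⌋₊ ≤ 1 := by
  calc r * ⌊1 / r⌋₊ ≤ r * (1 / r) := by gcongr; exact Nat.floor_le (by positivity)
    _ = 1 := by field_simp

lemma one_lt_mul_floor_one_div_add_one {r : ℝ} (hr : 0 < r) : 1 < r * (⌊1 / r⌋₊ + 1) := by
  calc 1 = r * (1 / r) := by field_simp
    _ < r * (⌊1 / r⌋₊ + 1) := by gcongr; exact Nat.lt_floor_add_one _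

lemma le_ceil_div_mul {r : ℝ} {k c n s : ℕ} (hδ : 0 < r * (k + 1) - 1) (hrc : r * n ≤ c)
    (hs : (k + 1) * c ≤ k * s + n) : n ≤ ⌈k / (r * (k + 1) - 1)⌉₊ * s := by
  have hs' : ((k + 1) * c : ℝ) ≤ k * s + n := by exact_mod_cast hs
  have : (n : ℝ) ≤ ⌈k / (r * (k + 1) - 1)⌉₊ * s :=
    calc (n : ℝ) ≤ k / (r * (k + 1) - 1) * s := by
          rw [div_mul_eq_mul_div, le_div_iff₀ hδ]; nlinarith
      _ ≤ ⌈k / (r * (k + 1) - 1)⌉₊ * s := by gcongr; exact Nat.le_ceil _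
  exact_mod_cast this

theorem stmt_13 (r : ℝ) (hr0 : 0 < r) (hr1 : r ≤ 1) (k : ℕ) (hk : k = ⌊1 / r⌋₊) :
    ∃ d : ℝ, 0 < d ∧ d ≤ 1 ∧ ∃ N : ℕ, ∀ n ≥ N,
      d * (invRamsey n k : ℝ) ≤ (Q n ⌈r * n⌉₊ : ℝ) ∧ Q n ⌈r * n⌉₊ ≤ invRamsey n k := by
  have hk1 : 1 ≤ k := hk ▸ Nat.one_le_floor_iff _ |>.2 (one_le_one_div hr0 hr1)
  have hrk : r * k ≤ 1 := hk ▸ mul_floor_one_div_le_one hr0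
  have hδ : 0 < r * (k + 1) - 1 := by linarith [hk ▸ one_lt_mul_floor_one_div_add_one hr0]
  set M := ⌈k / (r * (k + 1) - 1)⌉₊
  have hM : 1 ≤ M := Nat.one_le_ceil_iff.2 (by positivity)
  have hM' : 1 / (M : ℝ) ≤ 1 := by rw [div_le_one (by positivity)]; exact_mod_cast hM
  refine ⟨1 / M, by positivity, hM', 1, fun n hn => ?_⟩
  set c := ⌈r * n⌉₊
  have hrn : 0 < r * n := by positivity
  have hc : 1 ≤ c := Nat.one_le_ceil_iff.2 hrn
  have hcn : c ≤ n := Nat.ceil_le.2 (by nlinarith)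
  have hcr : (c : ℝ) < r * n + 1 := Nat.ceil_lt_add_one hrn.le
  obtain ⟨s, hs, hsQ⟩ := exists_invRamsey_le_Q k hc hcn
  have hnMs : n ≤ M * s := le_ceil_div_mul hδ (Nat.le_ceil _) hs
  refine ⟨?_, Q_le_invRamsey hk1 hc (by exact_mod_cast (by nlinarith : (c * k : ℝ) < n + k))⟩
  have : invRamsey n k ≤ M * Q n c :=
    calc invRamsey n k ≤ invRamsey (M * s) k := invRamsey_mono hk1 hnMs
      _ ≤ M * invRamsey s k := invRamsey_mul_le hk1 M s
      _ ≤ M * Q n c := Nat.mul_le_mul_left M hsQ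
  rw [one_div, inv_mul_le_iff₀ (by positivity)]
  exact_mod_cast this
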